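/- arXiv:0908.2616 — 3 statements merged into one kernel-verified Lean document; each statement's English description precedes it below -/
import Mathlib

section
/- (Corollary 1(i), asymptotic oscillation.) Consider the interval design with target p ∈ (0,1) and margins Δp₁, Δp₂ > 0. Suppose no level u has F(u) ∈ [p−Δp₁, p+Δp₂], but there exists u₀ ∈ {1,…,m−1} with F(u₀) < p−Δp₁ and F(u₀+1) > p+Δp₂ (this holds whenever p ∈ [F(1), F(m)] and no level lies in the interval). Then almost surely the set of levels visited infinitely often is exactly {u₀, u₀+1}: the design eventually oscillates between the two doses whose F values straddle the target interval. -/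
/-!
For a level `u`, the centered responses `1{U_i ≤ F u} - F u` at the visits to `u`, weighted by
`1 / n_u(i)`, form a martingale transform with independent mean-zero noise. Its squared weights
sum to at most `∑ 1/k² ≤ 2`, so it is bounded in `L²` and converges almost surely; by Kronecker's
lemma `F̂ₙ(u) → F u` whenever, in addition, `u` is visited infinitely often.

Fix a path on which this holds at every level. A level `≤ u₀` that is visited infinitely often is
eventually always left upwards, a level `≥ u₀ + 1` downwards; walking from any level visited
infinitely often towards the pair shows that `u₀` and `u₀ + 1` are both visited infinitely often.
Once the estimates at these two levels have settled on their sides of the target interval, each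
visit to `u₀` is followed by one to `u₀ + 1` and vice versa, so the design never leaves the pair.
-/

open MeasureTheory ProbabilityTheory Filter

noncomputable section

/-- Toxicity response of subject `i`: `Y i = 1` iff `U i ≤ F (X i)`. -/
def resp {Ω : Type*} (F : ℕ → ℝ) (U : ℕ → Ω → ℝ) (X : ℕ → Ω → ℕ) (i : ℕ) (ω : Ω) : ℝ :=
  if U i ω ≤ F (X i ω) then 1 else 0

/-- Number of subjects among the first `n` assigned to dose level `u`. -/
def visits {Ω : Type*} (X : ℕ → Ω → ℕ) (u n : ℕ) (ω : Ω) : ℕ :=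
  ((Finset.Icc 1 n).filter fun i => X i ω = u).card

/-- The martingale `M_n = ∑_{i=1}^n 1{X_i = u} (Y_i − F(u))`. -/
def Mart {Ω : Type*} (F : ℕ → ℝ) (U : ℕ → Ω → ℝ) (X : ℕ → Ω → ℕ) (u n : ℕ) (ω : Ω) : ℝ :=
  ∑ i ∈ Finset.Icc 1 n, (if X i ω = u then (1:ℝ) else 0) * (resp F U X i ω - F u)

/-- Empirical toxicity frequency at dose `u` after `n` subjects. -/
def Fhat {Ω : Type*} (F : ℕ → ℝ) (U : ℕ → Ω → ℝ) (X : ℕ → Ω → ℕ) (u n : ℕ) (ω : Ω) : ℝ :=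
  (∑ i ∈ Finset.Icc 1 n, if X i ω = u then resp F U X i ω else 0) / (visits X u n ω : ℝ)

/-- The filtration `ℱ_n = σ(U_1, …, U_n)`. -/
def natFilt {Ω : Type*} [mΩ : MeasurableSpace Ω] (U : ℕ → Ω → ℝ)
    (hU : ∀ i, Measurable (U i)) : Filtration ℕ mΩ where
  seq n := ⨆ i ∈ Finset.Icc 1 n, MeasurableSpace.comap (U i) inferInstance
  mono' := fun a b hab => by
    refine iSup₂_le fun i hi => ?_
    refine le_iSup₂_of_le i ?_ le_rfl
    rw [Finset.mem_Icc] at hi ⊢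
    exact ⟨hi.1, hi.2.trans hab⟩
  le' := fun n => iSup₂_le fun i _ => (hU i).comap_le

/-- The interval design transition rule with target `p` and margins `Δ₁, Δ₂`:
repeat the current dose if the empirical rate at it lies in `(p−Δ₁, p+Δ₂)`, escalate one
level (boundary permitting) if it is `≤ p−Δ₁`, and de-escalate one level (boundary
permitting) if it is `≥ p+Δ₂`. -/
def intervalRule {Ω : Type*} (m : ℕ) (p Δ₁ Δ₂ : ℝ) (F : ℕ → ℝ) (U : ℕ → Ω → ℝ)
    (X : ℕ → Ω → ℕ) : Prop :=
  ∀ n, 1 ≤ n → ∀ ω : Ω,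
    (p - Δ₁ < Fhat F U X (X n ω) n ω → Fhat F U X (X n ω) n ω < p + Δ₂ →
      X (n + 1) ω = X n ω) ∧
    (Fhat F U X (X n ω) n ω ≤ p - Δ₁ → X (n + 1) ω = min (X n ω + 1) m) ∧
    (p + Δ₂ ≤ Fhat F U X (X n ω) n ω → X (n + 1) ω = max (X n ω - 1) 1)

open Topology

def visitWeight {Ω : Type*} (X : ℕ → Ω → ℕ) (u i : ℕ) (ω : Ω) : ℝ :=
  (if X i ω = u then 1 else 0) / (visits X u i ω : ℝ)

def centeredResp {Ω : Type*} (F : ℕ → ℝ) (U : ℕ → Ω → ℝ) (u i : ℕ) (ω : Ω) : ℝ :=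
  (if U i ω ≤ F u then 1 else 0) - F u

def weightedMart {Ω : Type*} (F : ℕ → ℝ) (U : ℕ → Ω → ℝ) (X : ℕ → Ω → ℕ) (u n : ℕ) (ω : Ω) :
    ℝ :=
  ∑ i ∈ Finset.Icc 1 n, visitWeight X u i ω * centeredResp F U u i ω

theorem tendsto_div_of_kronecker {T Z b : ℕ → ℝ} {L : ℝ} (hb : Monotone b) (hb0 : ∀ n, 0 ≤ b n)
    (hbtop : Tendsto b atTop atTop) (hZ : Tendsto Z atTop (𝓝 L))
    (hT : ∀ n, T (n + 1) = T n + b (n + 1) * (Z (n + 1) - Z n)) :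
    Tendsto (fun n => T n / b n) atTop (𝓝 0) := by
  rw [Metric.tendsto_nhds]
  intro ε hε
  obtain ⟨N, hN⟩ := Metric.tendsto_atTop.1 hZ (ε / 4) (by positivity)
  have hZN : ∀ n, N ≤ n → |Z n - L| ≤ ε / 4 := fun n hn => (hN n hn).le
  -- Abel summation against `Z - L`
  have habel : ∀ n, N ≤ n →
      |T n - b n * (Z n - L)| ≤ |T N - b N * (Z N - L)| + ε / 4 * (b n - b N) := by
    intro n hn
    induction n, hn using Nat.le_induction with
    | base => simp
    | succ n hn ih =>
      have hinc : 0 ≤ b (n + 1) - b n := sub_nonneg.2 (hb n.le_succ)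
      have hstep : |(b (n + 1) - b n) * (Z n - L)| ≤ ε / 4 * (b (n + 1) - b n) := by
        rw [abs_mul, abs_of_nonneg hinc, mul_comm]
        exact mul_le_mul_of_nonneg_right (hZN n hn) hinc
      calc |T (n + 1) - b (n + 1) * (Z (n + 1) - L)|
          = |(T n - b n * (Z n - L)) - (b (n + 1) - b n) * (Z n - L)| := by rw [hT]; ring_nf
        _ ≤ |T n - b n * (Z n - L)| + |(b (n + 1) - b n) * (Z n - L)| := abs_sub _ _
        _ ≤ _ := by linarith
  have hprod : ∀ k, N ≤ k → |b k * (Z k - L)| ≤ ε / 4 * b k := fun k hk => by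
    rw [abs_mul, abs_of_nonneg (hb0 k), mul_comm]
    exact mul_le_mul_of_nonneg_right (hZN k hk) (hb0 k)
  have hbound : ∀ n, N ≤ n → |T n| ≤ |T N| + ε / 2 * b n := by
    intro n hn
    have htri := abs_sub (T N) (b N * (Z N - L))
    calc |T n| = |(T n - b n * (Z n - L)) + b n * (Z n - L)| := by ring_nf
      _ ≤ |T n - b n * (Z n - L)| + |b n * (Z n - L)| := abs_add_le _ _
      _ ≤ _ := by linarith [habel n hn, hprod n hn, hprod N le_rfl]
  filter_upwards [hbtop.eventually_ge_atTop (4 * |T N| / ε + 1), eventually_ge_atTop N]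
    with n hbn hn
  have hbpos : 0 < b n := lt_of_lt_of_le (by positivity) hbn
  have hTN : 4 * |T N| ≤ (b n - 1) * ε := (div_le_iff₀ hε).1 (le_sub_iff_add_le.2 hbn)
  rw [Real.dist_eq, sub_zero, abs_div, abs_of_pos hbpos, div_lt_iff₀ hbpos]
  linarith [hbound n hn, mul_pos hε hbpos]

section Pathwise

variable {Ω : Type*} {F : ℕ → ℝ} {U : ℕ → Ω → ℝ} {X : ℕ → Ω → ℕ} {u i n : ℕ} {ω : Ω}

lemma visits_eq_sum : visits X u n ω = ∑ i ∈ Finset.Icc 1 n, if X i ω = u then 1 else 0 := by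
  rw [visits, Finset.card_filter]

lemma visits_succ :
    visits X u (n + 1) ω = visits X u n ω + if X (n + 1) ω = u then 1 else 0 := by
  rw [visits_eq_sum, visits_eq_sum, Finset.sum_Icc_succ_top (Nat.le_add_left 1 n)]

lemma visits_mono : Monotone fun n => visits X u n ω := fun _ _ hab =>
  Finset.card_le_card (Finset.filter_subset_filter _ (Finset.Icc_subset_Icc_right hab))

lemma visits_le : visits X u n ω ≤ n :=
  (Finset.card_filter_le _ _).trans (by simp)

lemma visits_lt_of_lt {j : ℕ} (hnj : n < j) (hj : X j ω = u) :
    visits X u n ω < visits X u j ω := by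
  obtain ⟨k, rfl⟩ := Nat.exists_eq_add_of_lt hnj
  rw [visits_succ, if_pos hj]
  exact Nat.lt_succ_of_le (visits_mono (Nat.le_add_right n k))

lemma visits_pos (hn : 0 < n) (h : X n ω = u) : 0 < visits X u n ω :=
  (Nat.zero_le _).trans_lt (visits_lt_of_lt hn h)

lemma tendsto_visits_atTop (h : ∃ᶠ n in atTop, X n ω = u) :
    Tendsto (fun n => visits X u n ω) atTop atTop := by
  refine tendsto_atTop_atTop_of_monotone visits_mono fun K => ?_
  induction K with
  | zero => exact ⟨0, Nat.zero_le _⟩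
  | succ K ih =>
    obtain ⟨n, hn⟩ := ih
    obtain ⟨j, hj, hXj⟩ := frequently_atTop.1 h (n + 1)
    exact ⟨j, hn.trans_lt (visits_lt_of_lt hj hXj)⟩

lemma Mart_succ :
    Mart F U X u (n + 1) ω = Mart F U X u n ω
      + visits X u (n + 1) ω * (weightedMart F U X u (n + 1) ω - weightedMart F U X u n ω) := by
  rw [Mart, Mart, weightedMart, weightedMart, Finset.sum_Icc_succ_top (Nat.le_add_left 1 n),
    Finset.sum_Icc_succ_top (Nat.le_add_left 1 n), add_sub_cancel_left]
  by_cases h : X (n + 1) ω = u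
  · have hv : (visits X u (n + 1) ω : ℝ) ≠ 0 := by
      exact_mod_cast (visits_pos n.succ_pos h).ne'
    simp only [visitWeight, centeredResp, resp, h, if_true]
    field_simp
  · simp [visitWeight, h]

lemma Fhat_eq_Mart_div_add (h : 0 < visits X u n ω) :
    Fhat F U X u n ω = Mart F U X u n ω / visits X u n ω + F u := by
  have hv : (visits X u n ω : ℝ) ≠ 0 := by exact_mod_cast h.ne'
  have hMart : Mart F U X u n ω
      = (∑ i ∈ Finset.Icc 1 n, if X i ω = u then resp F U X i ω else 0)
        - visits X u n ω * F u := by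
    rw [Mart, visits_eq_sum, Nat.cast_sum, Finset.sum_mul, ← Finset.sum_sub_distrib]
    refine Finset.sum_congr rfl fun i _ => ?_
    by_cases h : X i ω = u <;> simp [h]
  rw [Fhat, hMart]
  field_simp
  ring

lemma abs_visitWeight_le_one : |visitWeight X u i ω| ≤ 1 := by
  unfold visitWeight
  split_ifs with h
  · rcases Nat.eq_zero_or_pos (visits X u i ω) with h0 | h0
    · simp [h0]
    · rw [abs_div, abs_one, Nat.abs_cast, div_le_one (by exact_mod_cast h0)]
      exact_mod_cast h0
  · simp

lemma abs_centeredResp_le_one (hF : F u ∈ Set.Icc (0 : ℝ) 1) : |centeredResp F U u i ω| ≤ 1 := by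
  obtain ⟨h0, h1⟩ := hF
  rw [centeredResp, abs_le]
  split_ifs <;> constructor <;> linarith

lemma sum_sq_visitWeight_le_two : ∑ i ∈ Finset.Icc 1 n, visitWeight X u i ω ^ 2 ≤ 2 := by
  set A := (Finset.Icc 1 n).filter fun i => X i ω = u
  have hsq : ∀ i, visitWeight X u i ω ^ 2
      = if X i ω = u then ((visits X u i ω : ℝ) ^ 2)⁻¹ else 0 := by
    intro i
    unfold visitWeight
    split_ifs <;> simp
  have hinj : Set.InjOn (fun i => visits X u i ω) A := by
    intro a ha b hb hab
    simp only [A, Finset.coe_filter, Set.mem_ofPred_eq] at ha hb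
    rcases lt_trichotomy a b with hlt | rfl | hgt
    · exact absurd hab (visits_lt_of_lt hlt hb.2).ne
    · rfl
    · exact absurd hab (visits_lt_of_lt hgt ha.2).ne'
  calc ∑ i ∈ Finset.Icc 1 n, visitWeight X u i ω ^ 2
      = ∑ k ∈ A.image fun i => visits X u i ω, ((k : ℝ) ^ 2)⁻¹ := by
        rw [Finset.sum_image hinj, Finset.sum_filter]
        exact Finset.sum_congr rfl fun i _ => hsq i
    _ ≤ ∑ k ∈ Finset.Ioo 0 (n + 1), ((k : ℝ) ^ 2)⁻¹ := by
        refine Finset.sum_le_sum_of_subset_of_nonneg ?_ fun _ _ _ => by positivity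
        intro k hk
        simp only [A, Finset.mem_image, Finset.mem_filter, Finset.mem_Icc] at hk
        obtain ⟨i, ⟨⟨hi1, hin⟩, hXi⟩, rfl⟩ := hk
        exact Finset.mem_Ioo.2 ⟨visits_pos hi1 hXi, Nat.lt_succ_of_le (visits_le.trans hin)⟩
    _ ≤ 2 := by simpa using sum_Ioo_inv_sq_le (α := ℝ) 0 (n + 1)

lemma tendsto_Fhat_of_tendsto_weightedMart {L : ℝ}
    (hZ : Tendsto (fun n => weightedMart F U X u n ω) atTop (𝓝 L))
    (hinf : ∃ᶠ n in atTop, X n ω = u) :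
    Tendsto (fun n => Fhat F U X u n ω) atTop (𝓝 (F u)) := by
  have hvis := tendsto_visits_atTop hinf
  have hkron := tendsto_div_of_kronecker (T := fun n => Mart F U X u n ω)
    (fun _ _ hab => Nat.cast_le.2 (visits_mono hab)) (fun _ => Nat.cast_nonneg _)
    (tendsto_natCast_atTop_atTop.comp hvis) hZ fun _ => Mart_succ
  refine (zero_add (F u) ▸ hkron.add_const (F u)).congr' ?_
  filter_upwards [hvis.eventually_ge_atTop 1] with n hn
  exact (Fhat_eq_Mart_div_add hn).symm

end Pathwise

section Endgame

variable {x : ℕ → ℕ} {G : ℕ → ℕ → ℝ} {m u : ℕ} {a b : ℝ}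

lemma mem_of_frequently_eq {s : Set ℕ} (hx : ∀ᶠ n in atTop, x n ∈ s)
    (hu : ∃ᶠ n in atTop, x n = u) : u ∈ s := by
  obtain ⟨n, rfl, hn⟩ := (hu.and_eventually hx).exists
  exact hn

lemma exists_frequently_eq {s : Finset ℕ} (hx : ∀ᶠ n in atTop, x n ∈ s) :
    ∃ u ∈ s, ∃ᶠ n in atTop, x n = u := by
  by_contra! h
  obtain ⟨n, hn, hne⟩ := (hx.and ((eventually_all_finset s).2 h)).exists
  exact hne _ hn rfl

lemma frequently_eq_succ (hup : ∀ n, 1 ≤ n → G (x n) n ≤ a → x (n + 1) = min (x n + 1) m)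
    (hu : ∃ᶠ n in atTop, x n = u) (hG : ∀ᶠ n in atTop, G u n ≤ a) (hum : u < m) :
    ∃ᶠ n in atTop, x n = u + 1 := by
  refine (tendsto_add_atTop_nat 1).frequently
    ((hu.and_eventually (hG.and (eventually_ge_atTop 1))).mono ?_)
  rintro n ⟨hxn, hGn, hn⟩
  rw [hup n hn (by rwa [hxn]), hxn, min_eq_left hum]

lemma frequently_eq_pred (hdown : ∀ n, 1 ≤ n → b ≤ G (x n) n → x (n + 1) = max (x n - 1) 1)
    (hu : ∃ᶠ n in atTop, x n = u) (hG : ∀ᶠ n in atTop, b ≤ G u n) (hu1 : 1 < u) :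
    ∃ᶠ n in atTop, x n = u - 1 := by
  refine (tendsto_add_atTop_nat 1).frequently
    ((hu.and_eventually (hG.and (eventually_ge_atTop 1))).mono ?_)
  rintro n ⟨hxn, hGn, hn⟩
  rw [hdown n hn (by rwa [hxn]), hxn, max_eq_left (Nat.le_sub_one_of_lt hu1)]

lemma eventually_eq_or_eq_succ
    (hup : ∀ n, 1 ≤ n → G (x n) n ≤ a → x (n + 1) = min (x n + 1) m)
    (hdown : ∀ n, 1 ≤ n → b ≤ G (x n) n → x (n + 1) = max (x n - 1) 1)
    (hu : ∃ᶠ n in atTop, x n = u) (hlow : ∀ᶠ n in atTop, G u n ≤ a)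
    (hhigh : ∀ᶠ n in atTop, b ≤ G (u + 1) n) (hu1 : 1 ≤ u) (hum : u + 1 ≤ m) :
    ∀ᶠ n in atTop, x n = u ∨ x n = u + 1 := by
  obtain ⟨N, hN⟩ := eventually_atTop.1 ((hlow.and hhigh).and (eventually_ge_atTop 1))
  obtain ⟨n₀, hn₀, hxn₀⟩ := frequently_atTop.1 hu N
  refine eventually_atTop.2 ⟨n₀, fun n hn => ?_⟩
  induction n, hn using Nat.le_induction with
  | base => exact Or.inl hxn₀
  | succ n hn ih =>
    obtain ⟨⟨hGlow, hGhigh⟩, hn1⟩ := hN n (hn₀.trans hn)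
    rcases ih with h | h
    · exact Or.inr (by rw [hup n hn1 (by rwa [h]), h, min_eq_left hum])
    · exact Or.inl (by rw [hdown n hn1 (by rwa [h]), h, Nat.add_sub_cancel, max_eq_left hu1])

theorem setOf_frequently_eq_eq_pair {F : ℕ → ℝ} {u₀ : ℕ} (hF : StrictMonoOn F (Set.Icc 1 m))
    (hup : ∀ n, 1 ≤ n → G (x n) n ≤ a → x (n + 1) = min (x n + 1) m)
    (hdown : ∀ n, 1 ≤ n → b ≤ G (x n) n → x (n + 1) = max (x n - 1) 1)
    (hx : ∀ᶠ n in atTop, x n ∈ Set.Icc 1 m)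
    (hconv : ∀ u, (∃ᶠ n in atTop, x n = u) → Tendsto (G u) atTop (𝓝 (F u)))
    (hu₀ : u₀ ∈ Set.Icc 1 m) (hu₀' : u₀ + 1 ∈ Set.Icc 1 m)
    (hbelow : F u₀ < a) (habove : b < F (u₀ + 1)) :
    {u | ∃ᶠ n in atTop, x n = u} = {u₀, u₀ + 1} := by
  have hlow : ∀ u, (∃ᶠ n in atTop, x n = u) → u ≤ u₀ → ∀ᶠ n in atTop, G u n ≤ a :=
    fun u hu hle => ((hconv u hu).eventually_lt_const
      ((hF.monotoneOn (mem_of_frequently_eq hx hu) hu₀ hle).trans_lt hbelow)).mono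
      fun _ => le_of_lt
  have hhigh : ∀ u, (∃ᶠ n in atTop, x n = u) → u₀ + 1 ≤ u → ∀ᶠ n in atTop, b ≤ G u n :=
    fun u hu hle => ((hconv u hu).eventually_const_lt
      (habove.trans_le (hF.monotoneOn hu₀' (mem_of_frequently_eq hx hu) hle))).mono
      fun _ => le_of_lt
  obtain ⟨hu₀1, -⟩ := hu₀
  obtain ⟨-, hu₀m⟩ := hu₀'
  have hpair : (∃ᶠ n in atTop, x n = u₀) ∧ ∃ᶠ n in atTop, x n = u₀ + 1 := by
    obtain ⟨s, -, hs⟩ := exists_frequently_eq (s := Finset.Icc 1 m) (by simpa using hx)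
    rcases le_or_gt s u₀ with hsu | hsu
    · have hclimb : ∀ k, s ≤ k → k ≤ u₀ + 1 → ∃ᶠ n in atTop, x n = k := by
        intro k hk
        induction k, hk using Nat.le_induction with
        | base => exact fun _ => hs
        | succ k hk ih =>
          intro hk'
          have hkfreq := ih (by omega)
          exact frequently_eq_succ hup hkfreq (hlow k hkfreq (by omega)) (by omega)
      exact ⟨hclimb u₀ hsu (by omega), hclimb (u₀ + 1) (by omega) le_rfl⟩
    · have hdescend : ∀ j, j ≤ s - u₀ → ∃ᶠ n in atTop, x n = s - j := by
        intro j
        induction j with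
        | zero => exact fun _ => hs
        | succ j ih =>
          intro hj
          have hjfreq := ih (by omega)
          have := frequently_eq_pred hdown hjfreq (hhigh _ hjfreq (by omega)) (by omega)
          rwa [Nat.sub_sub] at this
      constructor
      · simpa [Nat.sub_sub_self hsu.le] using hdescend (s - u₀) le_rfl
      · simpa [show s - (s - u₀ - 1) = u₀ + 1 by omega] using hdescend (s - u₀ - 1) (by omega)
  have htrap := eventually_eq_or_eq_succ hup hdown hpair.1 (hlow u₀ hpair.1 le_rfl)
    (hhigh _ hpair.2 le_rfl) hu₀1 hu₀m
  ext u
  refine ⟨fun hu => mem_of_frequently_eq htrap hu, ?_⟩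
  rintro (rfl | rfl)
  exacts [hpair.1, hpair.2]

end Endgame

lemma abs_sum_mul_le {Ω : Type*} {w ξ : ℕ → Ω → ℝ} (hbdd : ∀ i ω, |w i ω * ξ i ω| ≤ 1)
    (n : ℕ) (ω : Ω) : |∑ i ∈ Finset.Icc 1 n, w i ω * ξ i ω| ≤ n :=
  (Finset.abs_sum_le_sum_abs _ _).trans <|
    (Finset.sum_le_sum fun i _ => hbdd i ω).trans_eq (by simp)

section MartingaleTransform

variable {Ω : Type*} [mΩ : MeasurableSpace Ω] {P : Measure Ω}

lemma integral_mul_eq_zero_of_indep {m : MeasurableSpace Ω} (hm : m ≤ mΩ) {g η : Ω → ℝ}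
    (hg : Measurable[m] g) (hη : Measurable[mΩ] η)
    (hind : Indep (MeasurableSpace.comap η inferInstance) m P) (hmean : ∫ ω, η ω ∂P = 0) :
    ∫ ω, g ω * η ω ∂P = 0 := by
  have hgη : IndepFun g η P := by
    rw [IndepFun_iff_Indep]
    exact indep_of_indep_of_le_left hind.symm hg.comap_le
  exact (hgη.integral_mul_eq_mul_integral (hg.mono hm le_rfl).aestronglyMeasurable
    hη.aestronglyMeasurable).trans (by rw [hmean, mul_zero])

lemma integrable_of_abs_le [IsFiniteMeasure P] {f : Ω → ℝ} {C : ℝ} (hf : Measurable f)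
    (hC : ∀ ω, |f ω| ≤ C) : Integrable f P :=
  Integrable.of_bound hf.aestronglyMeasurable C (ae_of_all _ hC)

variable {ℱ : Filtration ℕ mΩ} {w ξ : ℕ → Ω → ℝ}

lemma measurable_mul_of_mem_Icc (hw : ∀ n, Measurable[ℱ n] (w (n + 1)))
    (hξ : ∀ n, Measurable[ℱ (n + 1)] (ξ (n + 1))) {i n : ℕ} (hi : i ∈ Finset.Icc 1 n) :
    Measurable[ℱ n] fun ω => w i ω * ξ i ω := by
  obtain ⟨hi1, hin⟩ := Finset.mem_Icc.1 hi
  obtain ⟨j, rfl⟩ := Nat.exists_eq_add_of_le' hi1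
  exact ((hw j).mono (ℱ.mono (by omega)) le_rfl).mul ((hξ j).mono (ℱ.mono hin) le_rfl)

lemma measurable_sum_mul (hw : ∀ n, Measurable[ℱ n] (w (n + 1)))
    (hξ : ∀ n, Measurable[ℱ (n + 1)] (ξ (n + 1))) (n : ℕ) :
    Measurable[ℱ n] fun ω => ∑ i ∈ Finset.Icc 1 n, w i ω * ξ i ω :=
  Finset.measurable_sum _ fun _ hi => measurable_mul_of_mem_Icc hw hξ hi

lemma martingale_sum_mul [IsFiniteMeasure P] (hw : ∀ n, Measurable[ℱ n] (w (n + 1)))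
    (hξ : ∀ n, Measurable[ℱ (n + 1)] (ξ (n + 1)))
    (hind : ∀ n, Indep (MeasurableSpace.comap (ξ (n + 1)) inferInstance) (ℱ n) P)
    (hmean : ∀ n, ∫ ω, ξ (n + 1) ω ∂P = 0) (hbdd : ∀ i ω, |w i ω * ξ i ω| ≤ 1) :
    Martingale (fun n ω => ∑ i ∈ Finset.Icc 1 n, w i ω * ξ i ω) ℱ P := by
  have hint : ∀ n, Integrable (fun ω => ∑ i ∈ Finset.Icc 1 n, w i ω * ξ i ω) P := fun n =>
    integrable_of_abs_le ((measurable_sum_mul hw hξ n).mono (ℱ.le n) le_rfl)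
      (abs_sum_mul_le hbdd n)
  refine martingale_of_setIntegral_eq_succ
    (fun n => (measurable_sum_mul hw hξ n).stronglyMeasurable) hint fun n s hs => ?_
  have hξm : Measurable (ξ (n + 1)) := (hξ n).mono (ℱ.le _) le_rfl
  have hD : Integrable (fun ω => w (n + 1) ω * ξ (n + 1) ω) P :=
    integrable_of_abs_le (((hw n).mono (ℱ.le n) le_rfl).mul hξm) (hbdd (n + 1))
  have hzero : ∫ ω in s, w (n + 1) ω * ξ (n + 1) ω ∂P = 0 := by
    rw [← integral_indicator (ℱ.le n s hs)]
    simp_rw [Set.indicator_mul_left]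
    exact integral_mul_eq_zero_of_indep (ℱ.le n) ((hw n).indicator hs) hξm (hind n) (hmean n)
  simp only [Finset.sum_Icc_succ_top (Nat.le_add_left 1 n)]
  rw [integral_add (hint n).integrableOn hD.integrableOn, hzero, add_zero]

lemma integral_sq_sum_mul [IsFiniteMeasure P] (hw : ∀ n, Measurable[ℱ n] (w (n + 1)))
    (hξ : ∀ n, Measurable[ℱ (n + 1)] (ξ (n + 1)))
    (hind : ∀ n, Indep (MeasurableSpace.comap (ξ (n + 1)) inferInstance) (ℱ n) P)
    (hmean : ∀ n, ∫ ω, ξ (n + 1) ω ∂P = 0) (hbdd : ∀ i ω, |w i ω * ξ i ω| ≤ 1) (n : ℕ) :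
    ∫ ω, (∑ i ∈ Finset.Icc 1 n, w i ω * ξ i ω) ^ 2 ∂P
      = ∫ ω, ∑ i ∈ Finset.Icc 1 n, (w i ω * ξ i ω) ^ 2 ∂P := by
  induction n with
  | zero => simp
  | succ n ih =>
    set S := fun ω => ∑ i ∈ Finset.Icc 1 n, w i ω * ξ i ω
    have hS : Measurable[ℱ n] S := measurable_sum_mul hw hξ n
    have hSm : Measurable S := hS.mono (ℱ.le n) le_rfl
    have hwm : Measurable (w (n + 1)) := (hw n).mono (ℱ.le n) le_rfl
    have hξm : Measurable (ξ (n + 1)) := (hξ n).mono (ℱ.le _) le_rfl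
    have hSb := abs_sum_mul_le hbdd n
    have hDb := hbdd (n + 1)
    have hcross : ∫ ω, 2 * S ω * w (n + 1) ω * ξ (n + 1) ω ∂P = 0 :=
      integral_mul_eq_zero_of_indep (ℱ.le n) (g := fun ω => 2 * S ω * w (n + 1) ω)
        ((measurable_const.mul hS).mul (hw n)) hξm (hind n) (hmean n)
    have hS2 : Integrable (fun ω => S ω ^ 2) P := integrable_of_abs_le (C := n ^ 2)
      (hSm.pow_const 2) fun ω => by
        rw [abs_pow]; exact pow_le_pow_left₀ (abs_nonneg _) (hSb ω) 2
    have hSD : Integrable (fun ω => 2 * S ω * w (n + 1) ω * ξ (n + 1) ω) P :=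
      integrable_of_abs_le (C := 2 * n) (((measurable_const.mul hSm).mul hwm).mul hξm)
        fun ω => by
          rw [mul_assoc, abs_mul, abs_mul, abs_two]
          nlinarith [abs_nonneg (S ω), abs_nonneg (w (n + 1) ω * ξ (n + 1) ω), hSb ω, hDb ω]
    have hsq : ∀ i ∈ Finset.Icc 1 (n + 1), Integrable (fun ω => (w i ω * ξ i ω) ^ 2) P :=
      fun i hi => integrable_of_abs_le (C := 1)
        (((measurable_mul_of_mem_Icc hw hξ hi).mono (ℱ.le _) le_rfl).pow_const 2) fun ω => by
          rw [abs_pow]; exact pow_le_one₀ (abs_nonneg _) (hbdd i ω)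
    have hD2 := hsq (n + 1) (Finset.right_mem_Icc.2 (Nat.le_add_left 1 n))
    have hsumD2 : Integrable (fun ω => ∑ i ∈ Finset.Icc 1 n, (w i ω * ξ i ω) ^ 2) P :=
      integrable_finsetSum _ fun i hi =>
        hsq i (Finset.Icc_subset_Icc_right n.le_succ hi)
    have hS2SD : Integrable (fun ω => S ω ^ 2 + 2 * S ω * w (n + 1) ω * ξ (n + 1) ω) P :=
      hS2.add hSD
    calc ∫ ω, (∑ i ∈ Finset.Icc 1 (n + 1), w i ω * ξ i ω) ^ 2 ∂P
        = ∫ ω, (S ω ^ 2 + 2 * S ω * w (n + 1) ω * ξ (n + 1) ω)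
            + (w (n + 1) ω * ξ (n + 1) ω) ^ 2 ∂P := by
          simp only [S, Finset.sum_Icc_succ_top (Nat.le_add_left 1 n)]
          ring_nf
      _ = ∫ ω, S ω ^ 2 ∂P + ∫ ω, (w (n + 1) ω * ξ (n + 1) ω) ^ 2 ∂P := by
          rw [integral_add hS2SD hD2, integral_add hS2 hSD, hcross, add_zero]
      _ = ∫ ω, ∑ i ∈ Finset.Icc 1 (n + 1), (w i ω * ξ i ω) ^ 2 ∂P := by
          simp only [Finset.sum_Icc_succ_top (Nat.le_add_left 1 n)]
          rw [ih, integral_add hsumD2 hD2]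

lemma eLpNorm_one_sum_mul_le [IsProbabilityMeasure P]
    (hw : ∀ n, Measurable[ℱ n] (w (n + 1))) (hξ : ∀ n, Measurable[ℱ (n + 1)] (ξ (n + 1)))
    (hind : ∀ n, Indep (MeasurableSpace.comap (ξ (n + 1)) inferInstance) (ℱ n) P)
    (hmean : ∀ n, ∫ ω, ξ (n + 1) ω ∂P = 0) (hbdd : ∀ i ω, |w i ω * ξ i ω| ≤ 1) {C : ℝ}
    (hC : ∀ n ω, ∑ i ∈ Finset.Icc 1 n, (w i ω * ξ i ω) ^ 2 ≤ C) (n : ℕ) :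
    eLpNorm (fun ω => ∑ i ∈ Finset.Icc 1 n, w i ω * ξ i ω) 1 P ≤ (1 + C).toNNReal := by
  set S := fun ω => ∑ i ∈ Finset.Icc 1 n, w i ω * ξ i ω
  have hSm : Measurable S := (measurable_sum_mul hw hξ n).mono (ℱ.le n) le_rfl
  have hSb := abs_sum_mul_le hbdd n
  have hS : Integrable S P := integrable_of_abs_le hSm hSb
  have hS2 : Integrable (fun ω => S ω ^ 2) P := integrable_of_abs_le (C := n ^ 2)
    (hSm.pow_const 2) fun ω => by
      rw [abs_pow]; exact pow_le_pow_left₀ (abs_nonneg _) (hSb ω) 2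
  have hnorm : ∫ ω, ‖S ω‖ ∂P ≤ 1 + C := calc
    ∫ ω, ‖S ω‖ ∂P ≤ ∫ ω, 1 + S ω ^ 2 ∂P :=
        integral_mono hS.norm ((integrable_const 1).add hS2) fun ω => by
          nlinarith [Real.norm_eq_abs (S ω), sq_abs (S ω), sq_nonneg (|S ω| - 1)]
    _ = 1 + ∫ ω, ∑ i ∈ Finset.Icc 1 n, (w i ω * ξ i ω) ^ 2 ∂P := by
        rw [integral_add (integrable_const 1) hS2, integral_sq_sum_mul hw hξ hind hmean hbdd n]
        simp
    _ ≤ 1 + C := by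
        gcongr
        calc ∫ ω, ∑ i ∈ Finset.Icc 1 n, (w i ω * ξ i ω) ^ 2 ∂P ≤ ∫ _, C ∂P :=
              integral_mono_of_nonneg (ae_of_all _ fun ω => by positivity)
                (integrable_const C) (ae_of_all _ (hC n))
          _ = C := by simp
  rw [eLpNorm_one_eq_lintegral_enorm, ← ofReal_integral_norm_eq_lintegral_enorm hS]
  exact ENNReal.ofReal_le_ofReal hnorm

theorem ae_exists_tendsto_sum_mul [IsProbabilityMeasure P]
    (hw : ∀ n, Measurable[ℱ n] (w (n + 1))) (hξ : ∀ n, Measurable[ℱ (n + 1)] (ξ (n + 1)))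
    (hind : ∀ n, Indep (MeasurableSpace.comap (ξ (n + 1)) inferInstance) (ℱ n) P)
    (hmean : ∀ n, ∫ ω, ξ (n + 1) ω ∂P = 0) (hbdd : ∀ i ω, |w i ω * ξ i ω| ≤ 1) {C : ℝ}
    (hC : ∀ n ω, ∑ i ∈ Finset.Icc 1 n, (w i ω * ξ i ω) ^ 2 ≤ C) :
    ∀ᵐ ω ∂P, ∃ L, Tendsto (fun n => ∑ i ∈ Finset.Icc 1 n, w i ω * ξ i ω) atTop (𝓝 L) := by
  have hmart := martingale_sum_mul hw hξ hind hmean hbdd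
  filter_upwards [hmart.submartingale.ae_tendsto_limitProcess
    (eLpNorm_one_sum_mul_le hw hξ hind hmean hbdd hC)] with ω hω using ⟨_, hω⟩

end MartingaleTransform

def intervalStep (m : ℕ) (a b : ℝ) (x : ℕ) (r : ℝ) : ℕ :=
  if r ≤ a then min (x + 1) m else if b ≤ r then max (x - 1) 1 else x

lemma measurable_intervalStep (m : ℕ) (a b : ℝ) :
    Measurable fun q : ℕ × ℝ => intervalStep m a b q.1 q.2 :=
  measurable_from_prod_countable_right fun x =>
    show Measurable fun r => intervalStep m a b x r from Measurable.ite measurableSet_Iic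
      measurable_const (Measurable.ite measurableSet_Ici measurable_const measurable_const)

lemma intervalRule.eq_intervalStep {Ω : Type*} {m : ℕ} {p Δ₁ Δ₂ : ℝ} {F : ℕ → ℝ}
    {U : ℕ → Ω → ℝ} {X : ℕ → Ω → ℕ} (h : intervalRule m p Δ₁ Δ₂ F U X) {n : ℕ} (hn : 1 ≤ n)
    (ω : Ω) :
    X (n + 1) ω = intervalStep m (p - Δ₁) (p + Δ₂) (X n ω) (Fhat F U X (X n ω) n ω) := by
  obtain ⟨hstay, hup, hdown⟩ := h n hn ω
  unfold intervalStep
  split_ifs with h₁ h₂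
  · exact hup h₁
  · exact hdown h₂
  · exact hstay (not_le.1 h₁) (not_le.1 h₂)

section Measurability

variable {Ω : Type*} {mΩ : MeasurableSpace Ω} {F : ℕ → ℝ} {U : ℕ → Ω → ℝ} {X : ℕ → Ω → ℕ}
  {u i n : ℕ}

lemma measurable_resp (hU : Measurable (U i)) (hX : Measurable (X i)) :
    Measurable (resp F U X i) :=
  Measurable.ite (measurableSet_le hU (measurable_from_nat.comp hX)) measurable_const
    measurable_const

lemma measurable_visits (hX : ∀ i ∈ Finset.Icc 1 n, Measurable (X i)) (u : ℕ) :
    Measurable fun ω => (visits X u n ω : ℝ) := by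
  have h : Measurable fun ω => visits X u n ω := by
    simp_rw [visits_eq_sum]
    exact Finset.measurable_sum _ fun i hi =>
      Measurable.ite (hX i hi (measurableSet_singleton u)) measurable_const measurable_const
  exact measurable_from_nat.comp h

lemma measurable_Fhat_self (hU : ∀ i ∈ Finset.Icc 1 n, Measurable (U i))
    (hX : ∀ i ∈ Finset.Icc 1 n, Measurable (X i)) (hn : 1 ≤ n) :
    Measurable fun ω => Fhat F U X (X n ω) n ω := by
  have hFhat : ∀ v, Measurable fun ω => Fhat F U X v n ω := fun v =>
    (Finset.measurable_sum _ fun i hi => Measurable.ite (hX i hi (measurableSet_singleton v))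
      (measurable_resp (hU i hi) (hX i hi)) measurable_const).div (measurable_visits hX v)
  exact (measurable_from_prod_countable_left (f := fun q : Ω × ℕ => Fhat F U X q.2 n q.1)
    hFhat).comp
    (measurable_id.prodMk (hX n (Finset.right_mem_Icc.2 hn)))

lemma measurable_visitWeight (hX : ∀ i ∈ Finset.Icc 1 n, Measurable (X i)) (hn : 1 ≤ n) :
    Measurable (visitWeight X u n) :=
  (Measurable.ite (hX n (Finset.right_mem_Icc.2 hn) (measurableSet_singleton u))
    measurable_const measurable_const).div (measurable_visits hX u)

lemma measurable_centeredResp (hU : Measurable (U i)) : Measurable (centeredResp F U u i) :=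
  (Measurable.ite (hU measurableSet_Iic) measurable_const measurable_const).sub_const _

end Measurability

section Model

variable {Ω : Type*} [mΩ : MeasurableSpace Ω] {P : Measure Ω} {m : ℕ} {F : ℕ → ℝ}
  {U : ℕ → Ω → ℝ} {X : ℕ → Ω → ℕ}

lemma measurable_U_natFilt (hU : ∀ i, Measurable (U i)) {i n : ℕ} (hi : i ∈ Finset.Icc 1 n) :
    Measurable[natFilt U hU n] (U i) :=
  measurable_iff_comap_le.2 <| le_iSup₂
    (f := fun j (_ : j ∈ Finset.Icc 1 n) => MeasurableSpace.comap (U j) inferInstance) i hi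

lemma indep_comap_natFilt (hU : ∀ i, Measurable (U i)) (hUindep : iIndepFun U P) (n : ℕ) :
    Indep (MeasurableSpace.comap (U (n + 1)) inferInstance) (natFilt U hU n) P := by
  have h := indep_biSup_compl (fun i => (hU i).comap_le) hUindep.iIndep {n + 1}
  have hsingle : (⨆ i ∈ ({n + 1} : Set ℕ), MeasurableSpace.comap (U i) inferInstance)
      = MeasurableSpace.comap (U (n + 1)) inferInstance := by
    simp
  rw [hsingle] at h
  refine indep_of_indep_of_le_right h (iSup₂_le fun i hi => le_iSup₂_of_le i ?_ le_rfl)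
  simp only [Set.mem_compl_iff, Set.mem_singleton_iff]
  exact (Finset.mem_Icc.1 hi).2.trans_lt n.lt_succ_self |>.ne

lemma measurable_X_natFilt (hU : ∀ i, Measurable (U i)) {p Δ₁ Δ₂ : ℝ}
    (hrule : intervalRule m p Δ₁ Δ₂ F U X) {x₀ : ℕ} (hX1 : ∀ ω, X 1 ω = x₀) :
    ∀ n, ∀ i ∈ Finset.Icc 1 (n + 1), Measurable[natFilt U hU n] (X i) := by
  intro n
  induction n with
  | zero =>
    intro i hi
    obtain rfl : i = 1 := by simpa using hi
    rw [show X 1 = fun _ => x₀ from funext hX1]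
    exact measurable_const
  | succ n ih =>
    have hprev : ∀ i ∈ Finset.Icc 1 (n + 1), Measurable[natFilt U hU (n + 1)] (X i) :=
      fun i hi => (ih i hi).mono ((natFilt U hU).mono n.le_succ) le_rfl
    intro i hi
    rcases (Finset.mem_Icc.1 hi).2.lt_or_eq with hlt | rfl
    · exact hprev i (Finset.mem_Icc.2 ⟨(Finset.mem_Icc.1 hi).1, Nat.lt_succ_iff.1 hlt⟩)
    · rw [show X (n + 1 + 1) = _ from funext (hrule.eq_intervalStep (Nat.le_add_left 1 n))]
      exact (measurable_intervalStep _ _ _).comp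
        ((hprev _ (Finset.right_mem_Icc.2 (Nat.le_add_left 1 n))).prodMk
          (measurable_Fhat_self (fun i hi => measurable_U_natFilt hU hi) hprev
            (Nat.le_add_left 1 n)))

lemma integral_centeredResp [IsProbabilityMeasure P] {i u : ℕ} (hU : Measurable (U i))
    (hUdist : Measure.map (U i) P = volume.restrict (Set.Icc (0 : ℝ) 1))
    (hF : F u ∈ Set.Icc (0 : ℝ) 1) : ∫ ω, centeredResp F U u i ω ∂P = 0 := by
  have hprob : P.real (U i ⁻¹' Set.Iic (F u)) = F u := by
    have hset : Set.Iic (F u) ∩ Set.Icc 0 1 = Set.Icc 0 (F u) :=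
      Set.ext fun y => ⟨fun h => ⟨h.2.1, h.1⟩, fun h => ⟨h.2, h.1, h.2.trans hF.2⟩⟩
    rw [measureReal_def, ← Measure.map_apply hU measurableSet_Iic, hUdist,
      Measure.restrict_apply measurableSet_Iic, hset, Real.volume_Icc, sub_zero,
      ENNReal.toReal_ofReal hF.1]
  have hindicator : (fun ω => if U i ω ≤ F u then (1 : ℝ) else 0)
      = (U i ⁻¹' Set.Iic (F u)).indicator 1 := by
    funext ω
    by_cases h : U i ω ≤ F u <;> simp [h]
  unfold centeredResp
  rw [integral_sub ((integrable_const 1).indicator (hU measurableSet_Iic) |>.congr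
    (ae_of_all _ fun ω => congrFun hindicator.symm ω)) (integrable_const _), hindicator,
    integral_indicator_one (hU measurableSet_Iic), hprob]
  simp

theorem ae_exists_tendsto_weightedMart [IsProbabilityMeasure P] (hU : ∀ i, Measurable (U i))
    (hUindep : iIndepFun U P)
    (hUdist : ∀ i, Measure.map (U i) P = volume.restrict (Set.Icc (0 : ℝ) 1)) {p Δ₁ Δ₂ : ℝ}
    (hrule : intervalRule m p Δ₁ Δ₂ F U X) {x₀ : ℕ} (hX1 : ∀ ω, X 1 ω = x₀) {u : ℕ}
    (hF : F u ∈ Set.Icc (0 : ℝ) 1) :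
    ∀ᵐ ω ∂P, ∃ L, Tendsto (fun n => weightedMart F U X u n ω) atTop (𝓝 L) := by
  have hX := measurable_X_natFilt hU hrule hX1
  refine ae_exists_tendsto_sum_mul (ℱ := natFilt U hU) (C := 2)
    (fun n => measurable_visitWeight (hX n) (Nat.le_add_left 1 n))
    (fun n => measurable_centeredResp
      (measurable_U_natFilt hU (Finset.right_mem_Icc.2 (Nat.le_add_left 1 n))))
    (fun n => indep_of_indep_of_le_left (indep_comap_natFilt hU hUindep n)
      (measurable_centeredResp (comap_measurable (U (n + 1)))).comap_le)
    (fun n => integral_centeredResp (hU (n + 1)) (hUdist (n + 1)) hF)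
    (fun i ω => ?_) fun n ω =>
      (Finset.sum_le_sum fun i _ => ?_).trans (sum_sq_visitWeight_le_two (X := X) (u := u) (ω := ω))
  · rw [abs_mul]
    exact mul_le_one₀ abs_visitWeight_le_one (abs_nonneg _) (abs_centeredResp_le_one hF)
  · rw [mul_pow]
    exact mul_le_of_le_one_right (sq_nonneg _)
      (sq_le_one_iff_abs_le_one _ |>.2 (abs_centeredResp_le_one hF))

end Model

theorem interval_design_oscillates_general
    {Ω : Type*} [MeasurableSpace Ω] (P : Measure Ω) [IsProbabilityMeasure P]
    (m : ℕ)
    (F : ℕ → ℝ) (hFmono : StrictMonoOn F (Set.Icc 1 m))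
    (hF01 : ∀ v ∈ Set.Icc 1 m, F v ∈ Set.Icc (0:ℝ) 1)
    (U : ℕ → Ω → ℝ) (hUmeas : ∀ i, Measurable (U i))
    (hUindep : iIndepFun U P)
    (hUdist : ∀ i, Measure.map (U i) P = volume.restrict (Set.Icc (0:ℝ) 1))
    (X : ℕ → Ω → ℕ)
    (hXrange : ∀ i, 1 ≤ i → ∀ ω, X i ω ∈ Set.Icc 1 m)
    (x₀ : ℕ) (hX1 : ∀ ω, X 1 ω = x₀)
    (p Δ₁ Δ₂ : ℝ)
    (hrule : intervalRule m p Δ₁ Δ₂ F U X)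
    (u₀ : ℕ) (hu₀ : u₀ ∈ Set.Icc 1 m) (hu₀' : u₀ + 1 ∈ Set.Icc 1 m)
    (hbelow : F u₀ < p - Δ₁) (habove : p + Δ₂ < F (u₀ + 1)) :
    ∀ᵐ ω ∂P, {u : ℕ | ∃ᶠ n in atTop, X n ω = u} = {u₀, u₀ + 1} := by
  have hconv : ∀ᵐ ω ∂P, ∀ u ∈ Set.Icc 1 m,
      ∃ L, Tendsto (fun n => weightedMart F U X u n ω) atTop (𝓝 L) := by
    refine ae_all_iff.2 fun u => ?_
    by_cases hu : u ∈ Set.Icc 1 m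
    · filter_upwards [ae_exists_tendsto_weightedMart hUmeas hUindep hUdist hrule hX1
        (hF01 u hu)] with ω h _ using h
    · exact ae_of_all _ fun _ h => absurd h hu
  filter_upwards [hconv] with ω hω
  have hrange : ∀ᶠ n in atTop, X n ω ∈ Set.Icc 1 m :=
    eventually_atTop.2 ⟨1, fun n hn => hXrange n hn ω⟩
  refine setOf_frequently_eq_eq_pair (G := fun u n => Fhat F U X u n ω) hFmono
    (fun n hn => (hrule n hn ω).2.1)
    (fun n hn => (hrule n hn ω).2.2) hrange (fun u hu => ?_) hu₀ hu₀' hbelow habove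
  obtain ⟨L, hL⟩ := hω u (mem_of_frequently_eq hrange hu)
  exact tendsto_Fhat_of_tendsto_weightedMart hL hu

/-- **Corollary 1(i), asymptotic oscillation.** If no level has `F` value in
the closed target interval, but two adjacent levels `u₀, u₀+1` straddle it, then almost
surely the set of levels visited infinitely often by the interval design is exactly
`{u₀, u₀+1}`. -/
theorem interval_design_oscillates
    {Ω : Type*} [MeasurableSpace Ω] (P : Measure Ω) [IsProbabilityMeasure P]
    (m : ℕ) (hm : 1 ≤ m)
    (F : ℕ → ℝ) (hFmono : StrictMonoOn F (Set.Icc 1 m))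
    (hF01 : ∀ v ∈ Set.Icc 1 m, F v ∈ Set.Icc (0:ℝ) 1)
    (U : ℕ → Ω → ℝ) (hUmeas : ∀ i, Measurable (U i))
    (hUindep : iIndepFun U P)
    (hUdist : ∀ i, Measure.map (U i) P = volume.restrict (Set.Icc (0:ℝ) 1))
    (X : ℕ → Ω → ℕ) (hXmeas : ∀ i, Measurable (X i))
    (hXrange : ∀ i, 1 ≤ i → ∀ ω, X i ω ∈ Set.Icc 1 m)
    (x₀ : ℕ) (hx₀ : x₀ ∈ Set.Icc 1 m) (hX1 : ∀ ω, X 1 ω = x₀)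
    (p Δ₁ Δ₂ : ℝ) (hp : p ∈ Set.Ioo (0:ℝ) 1) (hΔ₁ : 0 < Δ₁) (hΔ₂ : 0 < Δ₂)
    (hrule : intervalRule m p Δ₁ Δ₂ F U X)
    (hnone : ∀ u ∈ Set.Icc 1 m, F u ∉ Set.Icc (p - Δ₁) (p + Δ₂))
    (u₀ : ℕ) (hu₀ : u₀ ∈ Set.Icc 1 m) (hu₀' : u₀ + 1 ∈ Set.Icc 1 m)
    (hbelow : F u₀ < p - Δ₁) (habove : p + Δ₂ < F (u₀ + 1)) :
    ∀ᵐ ω ∂P, {u : ℕ | ∃ᶠ n in atTop, X n ω = u} = {u₀, u₀ + 1} :=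
  interval_design_oscillates_general P m F hFmono hF01 U hUmeas hUindep hUdist X hXrange x₀ hX1 p Δ₁
    Δ₂ hrule u₀ hu₀ hu₀' hbelow habove
end
end

section
/- (Point-design lock-out step.) Consider the point design with target p < 1/2. Suppose that at some time n the highest tried level h := max T_n satisfies F̂_n(h) = 1, while some tried level v < h satisfies F̂_n(v) < 1. Then X_{k+1} ≠ h for all k ≥ n: level h is never assigned again, and consequently F̂_k(h) = 1 and max T_k = h for all k ≥ n. -/
/-!
Once `F̂(h) = 1`, the rule cannot escalate (since `1 > p`), and a de-escalation goes strictly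
below the lowest tried level. In the closest-to-target step, the tried level `v` with
`0 ≤ F̂(v) < 1` is strictly closer to `p` than `h`, because `|F̂(v) - p| < 1 - p` when
`p < 1/2`. So `h` is never assigned again, and then `F̂(h) = 1` and `max T = h` do not change.
Also `F̂(v) < 1` persists, because a non-toxic response at `v` stays in its record, so the
whole configuration is an invariant of the design.
-/

open MeasureTheory ProbabilityTheory Filter

noncomputable section

/-- The set of tried levels after `n` subjects: `T_n = {u ∈ {1,…,m} : n_u(n) > 0}`. -/
def tried {Ω : Type*} (m : ℕ) (X : ℕ → Ω → ℕ) (n : ℕ) (ω : Ω) : Finset ℕ :=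
  (Finset.Icc 1 m).filter fun u => 0 < visits X u n ω

/-- The highest tried level `h = max T_n`. -/
def highTried {Ω : Type*} (m : ℕ) (X : ℕ → Ω → ℕ) (n : ℕ) (ω : Ω) : ℕ :=
  sSup (↑(tried m X n ω) : Set ℕ)

/-- The lowest tried level `l = min T_n`. -/
def lowTried {Ω : Type*} (m : ℕ) (X : ℕ → Ω → ℕ) (n : ℕ) (ω : Ω) : ℕ :=
  sInf (↑(tried m X n ω) : Set ℕ)

/-- The point design (raw-frequency version, no monotonization) with target `p`:
if `F̂_n(h) < p` and `h < m`, escalate to `h+1`; else if `F̂_n(l) > p` and `l > 1`,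
de-escalate to `l−1`; otherwise assign the tried level whose empirical rate is closest
to `p`, ties broken in favor of the smaller level. -/
def pointRule {Ω : Type*} (m : ℕ) (p : ℝ) (F : ℕ → ℝ) (U : ℕ → Ω → ℝ)
    (X : ℕ → Ω → ℕ) : Prop :=
  ∀ n, 1 ≤ n → ∀ ω : Ω,
    (Fhat F U X (highTried m X n ω) n ω < p ∧ highTried m X n ω < m →
      X (n + 1) ω = highTried m X n ω + 1) ∧
    (¬(Fhat F U X (highTried m X n ω) n ω < p ∧ highTried m X n ω < m) →
      (p < Fhat F U X (lowTried m X n ω) n ω ∧ 1 < lowTried m X n ω) →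
      X (n + 1) ω = lowTried m X n ω - 1) ∧
    (¬(Fhat F U X (highTried m X n ω) n ω < p ∧ highTried m X n ω < m) →
      ¬(p < Fhat F U X (lowTried m X n ω) n ω ∧ 1 < lowTried m X n ω) →
      X (n + 1) ω ∈ tried m X n ω ∧
        ∀ u ∈ tried m X n ω,
          |Fhat F U X (X (n + 1) ω) n ω - p| < |Fhat F U X u n ω - p| ∨
          (|Fhat F U X (X (n + 1) ω) n ω - p| = |Fhat F U X u n ω - p| ∧
            X (n + 1) ω ≤ u))

namespace PointDesign

variable {Ω : Type*} {F : ℕ → ℝ} {U : ℕ → Ω → ℝ} {X : ℕ → Ω → ℕ} {m u k : ℕ} {ω : Ω}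

def toxCount (F : ℕ → ℝ) (U : ℕ → Ω → ℝ) (X : ℕ → Ω → ℕ) (u n : ℕ) (ω : Ω) : ℝ :=
  ∑ i ∈ Finset.Icc 1 n, if X i ω = u then resp F U X i ω else 0

lemma Fhat_eq_toxCount_div :
    Fhat F U X u k ω = toxCount F U X u k ω / (visits X u k ω : ℝ) := rfl

lemma resp_mem_Icc (i : ℕ) : resp F U X i ω ∈ Set.Icc (0 : ℝ) 1 := by
  unfold resp; split <;> norm_num

lemma toxCount_nonneg : 0 ≤ toxCount F U X u k ω :=
  Finset.sum_nonneg fun i _ => by split <;> simp [(resp_mem_Icc i).1]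

lemma Fhat_nonneg : 0 ≤ Fhat F U X u k ω :=
  div_nonneg toxCount_nonneg (Nat.cast_nonneg _)

lemma toxCount_succ :
    toxCount F U X u (k + 1) ω
      = toxCount F U X u k ω + if X (k + 1) ω = u then resp F U X (k + 1) ω else 0 :=
  Finset.sum_Icc_succ_top (by omega) _

lemma visits_succ :
    visits X u (k + 1) ω = visits X u k ω + if X (k + 1) ω = u then 1 else 0 := by
  simp only [visits, Finset.card_filter]
  exact Finset.sum_Icc_succ_top (by omega) _

lemma visits_mono : Monotone fun n => visits X u n ω := fun _ _ hkl =>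
  Finset.card_le_card (Finset.filter_subset_filter _ (Finset.Icc_subset_Icc_right hkl))

lemma Fhat_succ_of_ne (hne : X (k + 1) ω ≠ u) :
    Fhat F U X u (k + 1) ω = Fhat F U X u k ω := by
  simp [Fhat_eq_toxCount_div, toxCount_succ, visits_succ, hne]

lemma Fhat_lt_one_iff (hpos : 0 < visits X u k ω) :
    Fhat F U X u k ω < 1 ↔ toxCount F U X u k ω < visits X u k ω :=
  div_lt_one (by exact_mod_cast hpos)

lemma Fhat_succ_lt_one (hpos : 0 < visits X u k ω) (hlt : Fhat F U X u k ω < 1) :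
    Fhat F U X u (k + 1) ω < 1 := by
  rw [Fhat_lt_one_iff (hpos.trans_le (visits_mono k.le_succ))]
  rw [Fhat_lt_one_iff hpos] at hlt
  have hresp : resp F U X (k + 1) ω ≤ 1 := (resp_mem_Icc _).2
  rw [toxCount_succ, visits_succ]
  split <;> push_cast <;> linarith

lemma visits_pos_of_mem_tried (hu : u ∈ tried m X k ω) : 0 < visits X u k ω :=
  (Finset.mem_filter.mp hu).2

lemma tried_mono : Monotone fun n => tried m X n ω := fun _ _ hkl _ hu =>
  Finset.mem_filter.mpr ⟨(Finset.mem_filter.mp hu).1,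
    (visits_pos_of_mem_tried hu).trans_le (visits_mono hkl)⟩

lemma tried_succ_subset : tried m X (k + 1) ω ⊆ insert (X (k + 1) ω) (tried m X k ω) := by
  intro u hu
  rw [Finset.mem_insert]
  by_cases hx : X (k + 1) ω = u
  · exact Or.inl hx.symm
  · obtain ⟨hum, hpos⟩ := Finset.mem_filter.mp hu
    rw [visits_succ, if_neg hx, add_zero] at hpos
    exact Or.inr (Finset.mem_filter.mpr ⟨hum, hpos⟩)

lemma le_highTried (hu : u ∈ tried m X k ω) : u ≤ highTried m X k ω :=
  le_csSup (Finset.bddAbove _) hu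

lemma highTried_mem (hne : (tried m X k ω).Nonempty) : highTried m X k ω ∈ tried m X k ω :=
  hne.csSup_mem

lemma lowTried_le_highTried (hne : (tried m X k ω).Nonempty) :
    lowTried m X k ω ≤ highTried m X k ω :=
  le_highTried hne.csInf_mem

lemma highTried_succ_of_le (hne : (tried m X k ω).Nonempty)
    (hle : X (k + 1) ω ≤ highTried m X k ω) :
    highTried m X (k + 1) ω = highTried m X k ω := by
  have hmem : highTried m X k ω ∈ tried m X (k + 1) ω := tried_mono k.le_succ (highTried_mem hne)
  refine le_antisymm (csSup_le ⟨_, hmem⟩ fun b hb => ?_) (le_highTried hmem)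
  rcases Finset.mem_insert.mp (tried_succ_subset hb) with rfl | hbk
  · exact hle
  · exact le_highTried hbk

variable {p : ℝ}

theorem next_lt_highTried_of_pointRule (hrule : pointRule m p F U X) (hp2 : p < 1 / 2)
    (hk : 1 ≤ k) (hFh : Fhat F U X (highTried m X k ω) k ω = 1) {v : ℕ}
    (hv : v ∈ tried m X k ω) (hFv : Fhat F U X v k ω < 1) :
    X (k + 1) ω < highTried m X k ω := by
  obtain ⟨-, hdown, hclosest⟩ := hrule k hk ω
  have hno_up : ¬(Fhat F U X (highTried m X k ω) k ω < p ∧ highTried m X k ω < m) := by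
    rw [hFh]; rintro ⟨h1p, -⟩; linarith
  by_cases hde : p < Fhat F U X (lowTried m X k ω) k ω ∧ 1 < lowTried m X k ω
  · rw [hdown hno_up hde]
    have := lowTried_le_highTried ⟨v, hv⟩
    omega
  · obtain ⟨hmem, hmin⟩ := hclosest hno_up hde
    refine (le_highTried hmem).lt_of_ne fun heq => ?_
    have hFv_nonneg : 0 ≤ Fhat F U X v k ω := Fhat_nonneg
    have hcloser : |Fhat F U X v k ω - p| < |Fhat F U X (highTried m X k ω) k ω - p| := by
      rw [hFh, abs_of_pos (by linarith : (0 : ℝ) < 1 - p), abs_lt]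
      constructor <;> linarith
    rw [heq] at hmin
    rcases hmin v hv with hlt | ⟨heq', -⟩ <;> linarith

def LockedOut (m : ℕ) (F : ℕ → ℝ) (U : ℕ → Ω → ℝ) (X : ℕ → Ω → ℕ) (h v k : ℕ) (ω : Ω) :
    Prop :=
  highTried m X k ω = h ∧ Fhat F U X h k ω = 1 ∧ v ∈ tried m X k ω ∧ Fhat F U X v k ω < 1

variable {h v : ℕ}

theorem LockedOut.next_lt (hlock : LockedOut m F U X h v k ω) (hrule : pointRule m p F U X)
    (hp2 : p < 1 / 2) (hk : 1 ≤ k) : X (k + 1) ω < h := by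
  obtain ⟨rfl, hFh, hv, hFv⟩ := hlock
  exact next_lt_highTried_of_pointRule hrule hp2 hk hFh hv hFv

theorem LockedOut.succ (hlock : LockedOut m F U X h v k ω) (hrule : pointRule m p F U X)
    (hp2 : p < 1 / 2) (hk : 1 ≤ k) : LockedOut m F U X h v (k + 1) ω := by
  have hnext := hlock.next_lt hrule hp2 hk
  obtain ⟨rfl, hFh, hv, hFv⟩ := hlock
  exact ⟨highTried_succ_of_le ⟨v, hv⟩ hnext.le, (Fhat_succ_of_ne hnext.ne).trans hFh,
    tried_mono k.le_succ hv, Fhat_succ_lt_one (visits_pos_of_mem_tried hv) hFv⟩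

end PointDesign

open PointDesign in
theorem point_design_lock_out_general
    {Ω : Type*} (m : ℕ)
    (F : ℕ → ℝ)
    (U : ℕ → Ω → ℝ) (X : ℕ → Ω → ℕ)
    (p : ℝ) (hp2 : p < 1 / 2)
    (hrule : pointRule m p F U X)
    (ω : Ω) (n : ℕ) (hn : 1 ≤ n)
    (hhigh : Fhat F U X (highTried m X n ω) n ω = 1)
    (hv : ∃ v ∈ tried m X n ω, v < highTried m X n ω ∧ Fhat F U X v n ω < 1) :
    ∀ k, n ≤ k →
      X (k + 1) ω ≠ highTried m X n ω ∧
      Fhat F U X (highTried m X n ω) k ω = 1 ∧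
      highTried m X k ω = highTried m X n ω := by
  obtain ⟨v, hvmem, -, hFv⟩ := hv
  have hlock : ∀ k, n ≤ k → LockedOut m F U X (highTried m X n ω) v k ω := by
    intro k hk
    induction k, hk using Nat.le_induction with
    | base => exact ⟨rfl, hhigh, hvmem, hFv⟩
    | succ k hk ih => exact ih.succ hrule hp2 (hn.trans hk)
  intro k hk
  have hlock_k := hlock k hk
  exact ⟨(hlock_k.next_lt hrule hp2 (hn.trans hk)).ne, hlock_k.2.1, hlock_k.1⟩

/-- **point-design lock-out step.** Under the point design with target
`p < 1/2`, if at some time `n` the highest tried level `h = max T_n` satisfies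
`F̂_n(h) = 1` while some tried level `v < h` satisfies `F̂_n(v) < 1`, then level `h` is
never assigned again: `X_{k+1} ≠ h` for all `k ≥ n`, and consequently `F̂_k(h) = 1` and
`max T_k = h` for all `k ≥ n`. -/
theorem point_design_lock_out
    {Ω : Type*} (m : ℕ) (hm : 1 ≤ m)
    (F : ℕ → ℝ) (hFmono : StrictMonoOn F (Set.Icc 1 m))
    (hF01 : ∀ v ∈ Set.Icc 1 m, F v ∈ Set.Icc (0:ℝ) 1)
    (U : ℕ → Ω → ℝ) (X : ℕ → Ω → ℕ)
    (hXrange : ∀ i, 1 ≤ i → ∀ ω, X i ω ∈ Set.Icc 1 m)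
    (p : ℝ) (hp : 0 < p) (hp2 : p < 1 / 2)
    (hrule : pointRule m p F U X)
    (ω : Ω) (n : ℕ) (hn : 1 ≤ n)
    (hhigh : Fhat F U X (highTried m X n ω) n ω = 1)
    (hv : ∃ v ∈ tried m X n ω, v < highTried m X n ω ∧ Fhat F U X v n ω < 1) :
    ∀ k, n ≤ k →
      X (k + 1) ω ≠ highTried m X n ω ∧
      Fhat F U X (highTried m X n ω) k ω = 1 ∧
      highTried m X k ω = highTried m X n ω :=
  point_design_lock_out_general m F U X p hp2 hrule ω n hn hhigh hv
end
end

section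
/- (Section 4: the point design has positive probability of not converging to the MTD.) Consider the point design with target p ∈ (0, 1/2) and X_1 = 1. Suppose there is u* ∈ {2,…,m} with F(u*) = p (so u* is the MTD, F(u) < p for u < u*, and 0 < F(u) < 1 for u ≤ u*). Then the event consisting of: Y_i = 0 for i = 1,…,u*−1 (forcing the escalating allocations X_i = i for i = 1,…,u*) followed by Y_{u*} = 1, has probability F(u*)·∏_{u=1}^{u*−1}(1−F(u)) > 0, and on this event level u* is assigned exactly once in the entire infinite experiment. Consequently, the probability that the dose allocations converge to the MTD u* is strictly less than 1. -/
open MeasureTheory ProbabilityTheory Filter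

noncomputable section

/-! On the event, no toxicity at subjects `1, …, u*−1` forces escalation `X_i = i`, and the
toxicity at subject `u*` makes the empirical rate at `u*` equal to `1`. Since `p ≤ 1/2`, level `1`,
which is always tried, is at least as close to `p` as a rate `1` and wins ties, while escalation
goes above `u*` and de-escalation below level `1` is impossible; so `u*` is never assigned again.
The event only depends on `U_1, …, U_{u*}`, which makes its probability a product. -/

section Responses

variable {Ω : Type*} {F : ℕ → ℝ} {U : ℕ → Ω → ℝ} {X : ℕ → Ω → ℕ}

lemma resp_eq_zero_iff {i : ℕ} {ω : Ω} : resp F U X i ω = 0 ↔ F (X i ω) < U i ω := by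
  unfold resp; split_ifs with h <;> simpa using h

lemma resp_eq_one_iff {i : ℕ} {ω : Ω} : resp F U X i ω = 1 ↔ U i ω ≤ F (X i ω) := by
  unfold resp; split_ifs with h <;> simp [h]

lemma resp_nonneg (i : ℕ) (ω : Ω) : 0 ≤ resp F U X i ω := by
  unfold resp; split_ifs <;> norm_num

lemma resp_le_one (i : ℕ) (ω : Ω) : resp F U X i ω ≤ 1 := by
  unfold resp; split_ifs <;> norm_num

lemma Fhat_eq_sum_div_visits (u n : ℕ) (ω : Ω) :
    Fhat F U X u n ω =
      (∑ i ∈ (Finset.Icc 1 n).filter (X · ω = u), resp F U X i ω) / visits X u n ω := by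
  rw [Fhat, Finset.sum_filter]

lemma Fhat_nonneg (u n : ℕ) (ω : Ω) : 0 ≤ Fhat F U X u n ω := by
  rw [Fhat_eq_sum_div_visits]
  exact div_nonneg (Finset.sum_nonneg fun i _ => resp_nonneg i ω) (Nat.cast_nonneg _)

lemma Fhat_le_one (u n : ℕ) (ω : Ω) : Fhat F U X u n ω ≤ 1 := by
  rw [Fhat_eq_sum_div_visits]
  refine div_le_one_of_le₀ ?_ (Nat.cast_nonneg _)
  simpa [visits] using Finset.sum_le_card_nsmul _ _ 1 fun i _ => resp_le_one (F := F) i ω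

lemma Fhat_eq_zero_of_resp_eq_zero {u n : ℕ} {ω : Ω}
    (h : ∀ i ∈ Finset.Icc 1 n, resp F U X i ω = 0) : Fhat F U X u n ω = 0 := by
  rw [Fhat_eq_sum_div_visits, Finset.sum_eq_zero fun i hi => h i (Finset.mem_filter.1 hi).1,
    zero_div]

lemma Fhat_eq_one_of_unique_visit {u n j : ℕ} {ω : Ω} (hj : j ∈ Finset.Icc 1 n)
    (hXj : X j ω = u) (huniq : ∀ i ∈ Finset.Icc 1 n, X i ω = u → i = j)
    (htox : resp F U X j ω = 1) : Fhat F U X u n ω = 1 := by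
  have hvisits : (Finset.Icc 1 n).filter (X · ω = u) = {j} := by
    ext i
    simp only [Finset.mem_filter, Finset.mem_singleton]
    exact ⟨fun hi => huniq i hi.1 hi.2, fun hi => hi ▸ ⟨hj, hXj⟩⟩
  rw [Fhat_eq_sum_div_visits, visits, hvisits, Finset.sum_singleton, Finset.card_singleton, htox]
  norm_num

end Responses

section TriedLevels

variable {Ω : Type*} {m : ℕ} {X : ℕ → Ω → ℕ} {n : ℕ} {ω : Ω}

lemma mem_tried {u i : ℕ} (hu : u ∈ Finset.Icc 1 m) (hi : i ∈ Finset.Icc 1 n)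
    (hXi : X i ω = u) : u ∈ tried m X n ω :=
  Finset.mem_filter.2 ⟨hu, Finset.card_pos.2 ⟨i, Finset.mem_filter.2 ⟨hi, hXi⟩⟩⟩

lemma le_highTried {u : ℕ} (hu : u ∈ tried m X n ω) : u ≤ highTried m X n ω :=
  le_csSup (tried m X n ω).finite_toSet.bddAbove hu

lemma lowTried_le {u : ℕ} (hu : u ∈ tried m X n ω) : lowTried m X n ω ≤ u :=
  csInf_le (OrderBot.bddBelow _) hu

lemma tried_eq_Icc_of_escalating (hnm : n ≤ m) (hX : ∀ i, 1 ≤ i → i ≤ n → X i ω = i) :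
    tried m X n ω = Finset.Icc 1 n := by
  ext u
  refine ⟨fun hu => ?_, fun hu => mem_tried ?_ hu ?_⟩
  · obtain ⟨i, hi⟩ := Finset.card_pos.1 (Finset.mem_filter.1 hu).2
    obtain ⟨hin, hXi⟩ := Finset.mem_filter.1 hi
    rw [Finset.mem_Icc] at hin
    rwa [← hXi, hX i hin.1 hin.2, Finset.mem_Icc]
  · rw [Finset.mem_Icc] at hu ⊢; omega
  · rw [Finset.mem_Icc] at hu; exact hX u hu.1 hu.2

lemma highTried_eq_of_escalating (hn : 1 ≤ n) (hnm : n ≤ m)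
    (hX : ∀ i, 1 ≤ i → i ≤ n → X i ω = i) : highTried m X n ω = n := by
  rw [highTried, tried_eq_Icc_of_escalating hnm hX, Finset.coe_Icc, csSup_Icc hn]

end TriedLevels

section PointRule

variable {Ω : Type*} {m : ℕ} {p : ℝ} {F : ℕ → ℝ} {U : ℕ → Ω → ℝ} {X : ℕ → Ω → ℕ} {ω : Ω}

theorem pointRule.escalates (hrule : pointRule m p F U X) (hp : 0 < p) (hX1 : X 1 ω = 1)
    {k : ℕ} (hkm : k ≤ m) (hnotox : ∀ i, 1 ≤ i → i < k → X i ω = i → resp F U X i ω = 0) :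
    ∀ i, 1 ≤ i → i ≤ k → X i ω = i := by
  induction k with
  | zero => intro i hi hik; omega
  | succ k ih =>
    have hX : ∀ i, 1 ≤ i → i ≤ k → X i ω = i :=
      ih (by omega) fun i hi hik => hnotox i hi (by omega)
    intro i hi hik
    obtain hik | rfl := Nat.lt_or_eq_of_le hik
    · exact hX i hi (by omega)
    obtain rfl | hk := Nat.eq_zero_or_pos k
    · exact hX1
    have hnotox' : ∀ j ∈ Finset.Icc 1 k, resp F U X j ω = 0 := fun j hj => by
      rw [Finset.mem_Icc] at hj
      exact hnotox j hj.1 (by omega) (hX j hj.1 hj.2)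
    have hesc := (hrule k hk ω).1
    rw [highTried_eq_of_escalating hk (by omega) hX, Fhat_eq_zero_of_resp_eq_zero hnotox'] at hesc
    exact hesc ⟨hp, by omega⟩

theorem pointRule.next_ne_of_Fhat_eq_one (hrule : pointRule m p F U X) (hp : p ≤ 1 / 2)
    {n u : ℕ} (hn : 1 ≤ n) (hu : u ∈ tried m X n ω) (hu1 : 1 < u) (h1 : 1 ∈ tried m X n ω)
    (hFu : Fhat F U X u n ω = 1) : X (n + 1) ω ≠ u := by
  obtain ⟨hesc, -, hclosest⟩ := hrule n hn ω
  by_cases hc1 : Fhat F U X (highTried m X n ω) n ω < p ∧ highTried m X n ω < m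
  · have := le_highTried hu
    rw [hesc hc1]
    omega
  have hc2 : ¬(p < Fhat F U X (lowTried m X n ω) n ω ∧ 1 < lowTried m X n ω) := fun hc2 => by
    have := lowTried_le h1
    omega
  intro hXu
  have hdist1 : |Fhat F U X 1 n ω - p| ≤ 1 - p := by
    rw [abs_le]
    constructor <;> linarith [Fhat_nonneg (F := F) (U := U) (X := X) 1 n ω,
      Fhat_le_one (F := F) (U := U) (X := X) 1 n ω]
  rcases (hclosest hc1 hc2).2 1 h1 with hlt | ⟨-, hle⟩
  · rw [hXu, hFu, abs_of_nonneg (by linarith)] at hlt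
    linarith
  · omega

theorem pointRule.assigned_once (hrule : pointRule m p F U X) (hp : p ≤ 1 / 2) {u : ℕ}
    (hu1 : 1 < u) (hum : u ≤ m) (hX : ∀ i, 1 ≤ i → i ≤ u → X i ω = i)
    (htox : resp F U X u ω = 1) : ∀ n, 1 ≤ n → (X n ω = u ↔ n = u) := by
  have hXu : X u ω = u := hX u (by omega) le_rfl
  have hvisit : ∀ n, u ≤ n → ∀ i ∈ Finset.Icc 1 n, X i ω = u → i = u := by
    intro n hn
    induction n, hn using Nat.le_induction with
    | base =>
      intro i hi hXi
      rw [Finset.mem_Icc] at hi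
      rwa [hX i hi.1 hi.2] at hXi
    | succ n hn ih =>
      intro i hi hXi
      rw [Finset.mem_Icc] at hi
      obtain hin | rfl := Nat.lt_or_eq_of_le hi.2
      · exact ih i (Finset.mem_Icc.2 ⟨hi.1, by omega⟩) hXi
      have hu : u ∈ Finset.Icc 1 n := Finset.mem_Icc.2 ⟨by omega, hn⟩
      have hum' : u ∈ Finset.Icc 1 m := Finset.mem_Icc.2 ⟨by omega, hum⟩
      have h1 : 1 ∈ tried m X n ω :=
        mem_tried (Finset.mem_Icc.2 ⟨le_rfl, by omega⟩) (Finset.mem_Icc.2 ⟨le_rfl, by omega⟩)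
          (hX 1 le_rfl (by omega))
      exact absurd hXi (hrule.next_ne_of_Fhat_eq_one hp (by omega) (mem_tried hum' hu hXu) hu1
        h1 (Fhat_eq_one_of_unique_visit hu hXu ih htox))
  intro n hn
  refine ⟨hvisit (max n u) (le_max_right _ _) n (Finset.mem_Icc.2 ⟨hn, le_max_left _ _⟩), ?_⟩
  rintro rfl
  exact hXu

end PointRule

section Uniform

variable {Ω : Type*} [MeasurableSpace Ω] {P : Measure Ω} {V : Ω → ℝ} {a : ℝ}

lemma measure_preimage_Iic_of_map_eq_uniform (hV : Measurable V)
    (hmap : P.map V = volume.restrict (Set.Icc 0 1)) (ha : a ∈ Set.Icc (0 : ℝ) 1) :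
    P (V ⁻¹' Set.Iic a) = ENNReal.ofReal a := by
  have hset : Set.Iic a ∩ Set.Icc 0 1 = Set.Icc 0 a := by
    ext x
    simp only [Set.mem_inter_iff, Set.mem_Iic, Set.mem_Icc]
    exact ⟨fun hx => ⟨hx.2.1, hx.1⟩, fun hx => ⟨hx.2, hx.1, hx.2.trans ha.2⟩⟩
  rw [← Measure.map_apply hV measurableSet_Iic, hmap, Measure.restrict_apply measurableSet_Iic,
    hset, Real.volume_Icc, sub_zero]

lemma measure_preimage_Ioi_of_map_eq_uniform (hV : Measurable V)
    (hmap : P.map V = volume.restrict (Set.Icc 0 1)) (ha : a ∈ Set.Icc (0 : ℝ) 1) :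
    P (V ⁻¹' Set.Ioi a) = ENNReal.ofReal (1 - a) := by
  have hset : Set.Ioi a ∩ Set.Icc 0 1 = Set.Ioc a 1 := by
    ext x
    simp only [Set.mem_inter_iff, Set.mem_Ioi, Set.mem_Icc, Set.mem_Ioc]
    exact ⟨fun hx => ⟨hx.1, hx.2.2⟩, fun hx => ⟨hx.1, ha.1.trans hx.1.le, hx.2⟩⟩
  rw [← Measure.map_apply hV measurableSet_Ioi, hmap, Measure.restrict_apply measurableSet_Ioi,
    hset, Real.volume_Ioc]

end Uniform

/-- Values of `U i` for which subject `i`, treated at level `i`, shows no toxicity when `i ≠ u`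
and a toxicity when `i = u`. -/
def toxicityPattern (F : ℕ → ℝ) (u i : ℕ) : Set ℝ :=
  if i = u then Set.Iic (F u) else Set.Ioi (F i)

lemma measurableSet_toxicityPattern (F : ℕ → ℝ) (u i : ℕ) :
    MeasurableSet (toxicityPattern F u i) := by
  unfold toxicityPattern
  split_ifs
  exacts [measurableSet_Iic, measurableSet_Ioi]

lemma measure_biInter_toxicityPattern {Ω : Type*} [MeasurableSpace Ω] {P : Measure Ω}
    {U : ℕ → Ω → ℝ} (hUmeas : ∀ i, Measurable (U i)) (hUindep : iIndepFun U P)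
    (hUdist : ∀ i, P.map (U i) = volume.restrict (Set.Icc 0 1)) {F : ℕ → ℝ} {u : ℕ}
    (hu : 1 ≤ u) (hF01 : ∀ i ∈ Finset.Icc 1 u, F i ∈ Set.Icc (0 : ℝ) 1) :
    P (⋂ i ∈ Finset.Icc 1 u, U i ⁻¹' toxicityPattern F u i) =
      ENNReal.ofReal (F u * ∏ i ∈ Finset.Icc 1 (u - 1), (1 - F i)) := by
  have hIcc : Finset.Icc 1 u = insert u (Finset.Icc 1 (u - 1)) := by
    obtain ⟨k, rfl⟩ := Nat.exists_eq_add_of_le' hu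
    exact (Finset.insert_Icc_right_eq_Icc_add_one (by omega)).symm
  have hbefore : ∀ i ∈ Finset.Icc 1 (u - 1),
      P (U i ⁻¹' toxicityPattern F u i) = ENNReal.ofReal (1 - F i) := fun i hi => by
    rw [Finset.mem_Icc] at hi
    rw [toxicityPattern, if_neg (by omega), measure_preimage_Ioi_of_map_eq_uniform (hUmeas i)
      (hUdist i) (hF01 i (Finset.mem_Icc.2 ⟨hi.1, by omega⟩))]
  rw [hUindep.meas_biInter fun i _ => ⟨_, measurableSet_toxicityPattern F u i, rfl⟩, hIcc,
    Finset.prod_insert (by simp only [Finset.mem_Icc]; omega), Finset.prod_congr rfl hbefore, toxicityPattern, if_pos rfl,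
    measure_preimage_Iic_of_map_eq_uniform (hUmeas u) (hUdist u) (hF01 u (Finset.mem_Icc.2 ⟨hu, le_rfl⟩)),
    ← ENNReal.ofReal_prod_of_nonneg, ← ENNReal.ofReal_mul (hF01 u (Finset.mem_Icc.2 ⟨hu, le_rfl⟩)).1]
  intro i hi
  rw [Finset.mem_Icc] at hi
  linarith [(hF01 i (Finset.mem_Icc.2 ⟨hi.1, by omega⟩)).2]

theorem pointRule.toxicity_event_eq {Ω : Type*} {m : ℕ} {p : ℝ} {F : ℕ → ℝ} {U : ℕ → Ω → ℝ}
    {X : ℕ → Ω → ℕ} (hrule : pointRule m p F U X) (hp : 0 < p) (hX1 : ∀ ω, X 1 ω = 1) {u : ℕ}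
    (hu : 1 ≤ u) (hum : u ≤ m) :
    {ω | (∀ i, 1 ≤ i → i < u → resp F U X i ω = 0) ∧ resp F U X u ω = 1} =
      ⋂ i ∈ Finset.Icc 1 u, U i ⁻¹' toxicityPattern F u i := by
  ext ω
  simp only [Set.mem_ofPred_eq, Set.mem_iInter, Set.mem_preimage, Finset.mem_Icc]
  constructor
  · rintro ⟨hnotox, htox⟩ i ⟨hi1, hiu⟩
    have hXi := hrule.escalates hp (hX1 ω) hum (fun j hj hju _ => hnotox j hj hju) i hi1 hiu
    unfold toxicityPattern
    split_ifs with hi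
    · subst hi
      rwa [resp_eq_one_iff, hXi] at htox
    · have := hnotox i hi1 (by omega)
      rwa [resp_eq_zero_iff, hXi] at this
  · intro hU
    have hnotox : ∀ i, 1 ≤ i → i < u → X i ω = i → resp F U X i ω = 0 := fun i hi1 hiu hXi => by
      have := hU i ⟨hi1, hiu.le⟩
      rw [toxicityPattern, if_neg hiu.ne] at this
      rwa [resp_eq_zero_iff, hXi]
    have hX := hrule.escalates hp (hX1 ω) hum hnotox
    refine ⟨fun i hi1 hiu => hnotox i hi1 hiu (hX i hi1 hiu.le), ?_⟩
    have := hU u ⟨hu, le_rfl⟩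
    rw [toxicityPattern, if_pos rfl] at this
    rwa [resp_eq_one_iff, hX u hu le_rfl]

theorem point_design_positive_probability_of_nonconvergence_general
    {Ω : Type*} [MeasurableSpace Ω] (P : Measure Ω) [IsProbabilityMeasure P]
    (m : ℕ)
    (F : ℕ → ℝ) (hFmono : StrictMonoOn F (Set.Icc 1 m))
    (hF01 : ∀ v ∈ Set.Icc 1 m, F v ∈ Set.Icc (0:ℝ) 1)
    (U : ℕ → Ω → ℝ) (hUmeas : ∀ i, Measurable (U i))
    (hUindep : iIndepFun U P)
    (hUdist : ∀ i, Measure.map (U i) P = volume.restrict (Set.Icc (0:ℝ) 1))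
    (X : ℕ → Ω → ℕ)
    (hX1 : ∀ ω, X 1 ω = 1)
    (p : ℝ) (hp : 0 < p) (hp2 : p < 1 / 2)
    (hrule : pointRule m p F U X)
    (ustar : ℕ) (hustar : 2 ≤ ustar) (hustar' : ustar ≤ m)
    (hFstar : F ustar = p) :
    P {ω | (∀ i, 1 ≤ i → i < ustar → resp F U X i ω = 0) ∧ resp F U X ustar ω = 1}
        = ENNReal.ofReal (F ustar * ∏ u ∈ Finset.Icc 1 (ustar - 1), (1 - F u)) ∧
    0 < F ustar * ∏ u ∈ Finset.Icc 1 (ustar - 1), (1 - F u) ∧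
    (∀ ω ∈ {ω | (∀ i, 1 ≤ i → i < ustar → resp F U X i ω = 0) ∧
        resp F U X ustar ω = 1},
      (∀ i, 1 ≤ i → i ≤ ustar → X i ω = i) ∧
      (∀ n, 1 ≤ n → (X n ω = ustar ↔ n = ustar))) ∧
    P {ω | ∃ N, ∀ n, N ≤ n → X n ω = ustar} < 1 := by
  have hE := hrule.toxicity_event_eq hp hX1 (by omega : 1 ≤ ustar) hustar'
  set E := {ω | (∀ i, 1 ≤ i → i < ustar → resp F U X i ω = 0) ∧ resp F U X ustar ω = 1}
  have hprob : P E = ENNReal.ofReal (F ustar * ∏ u ∈ Finset.Icc 1 (ustar - 1), (1 - F u)) := by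
    rw [hE]
    refine measure_biInter_toxicityPattern hUmeas hUindep hUdist (by omega) fun i hi => ?_
    rw [Finset.mem_Icc] at hi
    exact hF01 i ⟨hi.1, hi.2.trans hustar'⟩
  have hpos : 0 < F ustar * ∏ u ∈ Finset.Icc 1 (ustar - 1), (1 - F u) := by
    refine mul_pos (hFstar ▸ hp) (Finset.prod_pos fun i hi => ?_)
    rw [Finset.mem_Icc] at hi
    have : F i < F ustar := hFmono ⟨hi.1, by omega⟩ ⟨by omega, hustar'⟩ (by omega)
    linarith
  have hpath : ∀ ω ∈ E, (∀ i, 1 ≤ i → i ≤ ustar → X i ω = i) ∧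
      (∀ n, 1 ≤ n → (X n ω = ustar ↔ n = ustar)) := fun ω ⟨hnotox, htox⟩ => by
    have hX := hrule.escalates hp (hX1 ω) hustar' fun i hi hiu _ => hnotox i hi hiu
    exact ⟨hX, hrule.assigned_once hp2.le (by omega) hustar' hX htox⟩
  refine ⟨hprob, hpos, hpath, ?_⟩
  have hconv : {ω | ∃ N, ∀ n, N ≤ n → X n ω = ustar} ⊆ Eᶜ := fun ω ⟨N, hN⟩ hω => by
    have := ((hpath ω hω).2 (max N ustar + 1) (by omega)).1 (hN _ (by omega))
    omega
  have hmeas : MeasurableSet E :=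
    hE ▸ Finset.measurableSet_biInter _ fun i _ => hUmeas i (measurableSet_toxicityPattern F ustar i)
  have hcompl : P Eᶜ < 1 - 0 :=
    prob_compl_lt_one_sub_of_lt_prob (hprob ▸ ENNReal.ofReal_pos.2 hpos) hmeas
  exact (measure_mono hconv).trans_lt (tsub_zero (1 : ENNReal) ▸ hcompl)

/-- **Section 4.** The point design has a positive probability of not
converging to the MTD: starting from the lowest dose with target `p ∈ (0, 1/2)` and
`F(u*) = p` for some `u* ∈ {2,…,m}`, the event of no toxicities at subjects `1,…,u*−1`
(which forces the escalation `X_i = i` for `i = 1,…,u*`) followed by a toxicity at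
subject `u*` has probability `F(u*)·∏_{u=1}^{u*−1}(1−F(u)) > 0`, and on this event level
`u*` is assigned exactly once in the entire infinite experiment. Consequently, the
probability that the dose allocations converge to `u*` is strictly less than `1`. -/
theorem point_design_positive_probability_of_nonconvergence
    {Ω : Type*} [MeasurableSpace Ω] (P : Measure Ω) [IsProbabilityMeasure P]
    (m : ℕ) (hm : 1 ≤ m)
    (F : ℕ → ℝ) (hFmono : StrictMonoOn F (Set.Icc 1 m))
    (hF01 : ∀ v ∈ Set.Icc 1 m, F v ∈ Set.Icc (0:ℝ) 1)
    (U : ℕ → Ω → ℝ) (hUmeas : ∀ i, Measurable (U i))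
    (hUindep : iIndepFun U P)
    (hUdist : ∀ i, Measure.map (U i) P = volume.restrict (Set.Icc (0:ℝ) 1))
    (X : ℕ → Ω → ℕ) (hXmeas : ∀ i, Measurable (X i))
    (hXrange : ∀ i, 1 ≤ i → ∀ ω, X i ω ∈ Set.Icc 1 m)
    (hX1 : ∀ ω, X 1 ω = 1)
    (p : ℝ) (hp : 0 < p) (hp2 : p < 1 / 2)
    (hrule : pointRule m p F U X)
    (ustar : ℕ) (hustar : 2 ≤ ustar) (hustar' : ustar ≤ m)
    (hFstar : F ustar = p) :
    P {ω | (∀ i, 1 ≤ i → i < ustar → resp F U X i ω = 0) ∧ resp F U X ustar ω = 1}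
        = ENNReal.ofReal (F ustar * ∏ u ∈ Finset.Icc 1 (ustar - 1), (1 - F u)) ∧
    0 < F ustar * ∏ u ∈ Finset.Icc 1 (ustar - 1), (1 - F u) ∧
    (∀ ω ∈ {ω | (∀ i, 1 ≤ i → i < ustar → resp F U X i ω = 0) ∧
        resp F U X ustar ω = 1},
      (∀ i, 1 ≤ i → i ≤ ustar → X i ω = i) ∧
      (∀ n, 1 ≤ n → (X n ω = ustar ↔ n = ustar))) ∧
    P {ω | ∃ N, ∀ n, N ≤ n → X n ω = ustar} < 1 :=
  point_design_positive_probability_of_nonconvergence_general P m F hFmono hF01 U hUmeas hUindep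
    hUdist X hX1 p hp hp2 hrule ustar hustar hustar' hFstar
end
end
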